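/- arXiv:2104.09180 — 6 statements merged into one kernel-verified Lean document; each statement's English description precedes it below -/
import Mathlib

section
/- Assume g ≠ 1 (so g generates G). For every n ∈ ℕ and all functions v, v', r, s : Fin n → ZMod p, setting coin_j := g^{v j} · h^{r j} and coin'_j := g^{v' j} · h^{s j}, the identity ∏_j coin'_j = (∏_j coin_j) · h^{∑_j (s j − r j)} holds if and only if ∑_j v' j = ∑_j v j in ZMod p. (The homomorphic zero-sum balance check for Pedersen-committed coins.) -/
/-!
Every element of `G` has order dividing `p`, so `a ↦ u ^ a.val` turns sums in `ZMod p` into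
products. Both sides therefore collapse to the form `g ^ (∑ v).val * h ^ (∑ s).val`, and what
remains is the injectivity of `a ↦ g ^ a.val`, which holds because `g` has order exactly `p`.
-/

open Finset

section PowVal

variable {M : Type*} [Monoid M] {n : ℕ} [NeZero n] {u : M}

theorem pow_val_add (hu : u ^ n = 1) (a b : ZMod n) :
    u ^ (a + b).val = u ^ a.val * u ^ b.val := by
  conv_rhs => rw [← pow_add, ← Nat.mod_add_div (a.val + b.val) n, pow_add, pow_mul, hu]
  rw [one_pow, mul_one, ZMod.val_add]

theorem pow_val_injective (hu : orderOf u = n) : Function.Injective fun a : ZMod n => u ^ a.val :=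
  fun a b hab => ZMod.val_injective n <|
    pow_injOn_Iio_orderOf (hu ▸ ZMod.val_lt a) (hu ▸ ZMod.val_lt b) hab

end PowVal

theorem pow_val_sum {M ι : Type*} [CommMonoid M] {n : ℕ} [NeZero n] {u : M} (hu : u ^ n = 1)
    (s : Finset ι) (f : ι → ZMod n) : u ^ (∑ i ∈ s, f i).val = ∏ i ∈ s, u ^ (f i).val := by
  induction s using Finset.cons_induction with
  | empty => simp
  | cons i s hi ih => rw [sum_cons, prod_cons, pow_val_add hu, ih]

/-- The homomorphic zero-sum balance check for Pedersen-committed coins. -/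
theorem pedersen_zero_sum_check {p : ℕ} [Fact p.Prime] {G : Type*} [CommGroup G]
    [Fintype G] (hG : Fintype.card G = p) (g h : G) (hg : g ≠ 1) :
    ∀ (n : ℕ) (v v' r s : Fin n → ZMod p),
      (∏ j, (g ^ (v' j).val * h ^ (s j).val))
          = (∏ j, (g ^ (v j).val * h ^ (r j).val)) * h ^ (∑ j, (s j - r j)).val
        ↔ (∑ j, v' j) = (∑ j, v j) := by
  intro n v v' r s
  have hpow (u : G) : u ^ p = 1 := hG ▸ pow_card_eq_one
  have hprod (w t : Fin n → ZMod p) :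
      ∏ j, (g ^ (w j).val * h ^ (t j).val) = g ^ (∑ j, w j).val * h ^ (∑ j, t j).val := by
    rw [prod_mul_distrib, pow_val_sum (hpow g), pow_val_sum (hpow h)]
  rw [hprod, hprod, mul_assoc, ← pow_val_add (hpow h), ← sum_add_distrib]
  simp only [add_sub_cancel, mul_left_inj]
  exact (pow_val_injective (orderOf_eq_prime (hpow g) hg)).eq_iff
end

section
/- Assume h ≠ 1 (so h generates G). For every fixed a ∈ G, pushing forward the uniform distribution on ZMod p along the map r ↦ a · h^r gives the uniform distribution on G; i.e., PMF.map (fun r => a * h ^ r) (uniform on ZMod p) equals the uniform PMF on G. In particular a Pedersen commitment g^x · h^r with uniformly random r is uniformly distributed on G, independently of the committed value x. (Distributional form of perfect hiding.) -/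
/-! Since `|G| = p` is prime, any `h ≠ 1` has order `p`, so `r ↦ h ^ r` is a bijection
`ZMod p → G`, and so is `r ↦ a * h ^ r`. A bijection between finite types carries the
uniform distribution to the uniform distribution. -/

open Function

theorem PMF.map_uniformOfFintype_of_bijective {α β : Type*} [Fintype α] [Nonempty α]
    [Fintype β] [Nonempty β] {f : α → β} (hf : Bijective f) :
    (uniformOfFintype α).map f = uniformOfFintype β := by
  ext b
  obtain ⟨a, rfl⟩ := hf.surjective b
  rw [map_apply, tsum_eq_single a fun a' ha' => if_neg fun h => ha' (hf.injective h).symm,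
    if_pos rfl, uniformOfFintype_apply, uniformOfFintype_apply, Fintype.card_of_bijective hf]

theorem orderOf_eq_card_of_prime_card {G : Type*} [Group G] [Fintype G]
    (hG : (Fintype.card G).Prime) {h : G} (hh : h ≠ 1) : orderOf h = Fintype.card G :=
  have := Fact.mk hG
  orderOf_eq_prime pow_card_eq_one hh

theorem pow_val_injective_of_orderOf_eq {G : Type*} [Monoid G] {n : ℕ} [NeZero n] {h : G}
    (hn : orderOf h = n) : Injective fun r : ZMod n => h ^ r.val := by
  intro r s hrs
  subst hn
  exact ZMod.val_injective _ (pow_injOn_Iio_orderOf (ZMod.val_lt r) (ZMod.val_lt s) hrs)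

theorem pedersen_hiding_uniform_general {p : ℕ} [Fact p.Prime] {G : Type*} [CommGroup G]
    [Fintype G] (hG : Fintype.card G = p) (h : G) (hh : h ≠ 1) :
    ∀ a : G,
      PMF.map (fun r : ZMod p => a * h ^ r.val) (PMF.uniformOfFintype (ZMod p))
        = PMF.uniformOfFintype G := by
  intro a
  have hord : orderOf h = p :=
    hG ▸ orderOf_eq_card_of_prime_card (hG ▸ Fact.out) hh
  have hinj : Injective fun r : ZMod p => a * h ^ r.val :=
    (mul_right_injective a).comp (pow_val_injective_of_orderOf_eq hord)
  have hcard : Fintype.card (ZMod p) = Fintype.card G := by rw [ZMod.card, hG]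
  exact PMF.map_uniformOfFintype_of_bijective
    ((Fintype.bijective_iff_injective_and_card _).mpr ⟨hinj, hcard⟩)

/-- Distributional form of perfect hiding: pushing forward the uniform
distribution on `ZMod p` along `r ↦ a * h ^ r` gives the uniform distribution
on `G`. -/
theorem pedersen_hiding_uniform {p : ℕ} [Fact p.Prime] {G : Type*} [CommGroup G]
    [Fintype G] (hG : Fintype.card G = p) (g h : G) (hh : h ≠ 1) :
    ∀ a : G,
      PMF.map (fun r : ZMod p => a * h ^ r.val) (PMF.uniformOfFintype (ZMod p))
        = PMF.uniformOfFintype G :=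
  pedersen_hiding_uniform_general hG h hh
end

section
/- Assume g ≠ 1 (so g generates G). If x₁, x₂, r₁, r₂ ∈ ZMod p satisfy g^{x₁} · h^{r₁} = g^{x₂} · h^{r₂} and x₁ ≠ x₂, then r₁ ≠ r₂ and h = g^{(x₁ − x₂) · (r₂ − r₁)⁻¹}. (Breaking the binding property of Pedersen commitments yields the discrete logarithm of h in base g.) -/
/-!
Since every element of `G` is killed by `p`, exponents may be computed in `ZMod p`.
Dividing the two openings gives `g ^ (x₁ - x₂) = h ^ (r₂ - r₁)`. As `g` has order `p`, the left
side is not `1`, so `r₂ - r₁` is invertible in `ZMod p`, and raising to its inverse isolates `h`.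
-/

section PowZModVal

variable {M : Type*} [Monoid M] {n : ℕ} {u : M}

theorem pow_mod_eq_of_pow_eq_one (hu : u ^ n = 1) (m : ℕ) : u ^ (m % n) = u ^ m := by
  conv_rhs => rw [← Nat.mod_add_div m n, pow_add, pow_mul, hu, one_pow, mul_one]

theorem pow_zmod_val_add [NeZero n] (hu : u ^ n = 1) (a b : ZMod n) :
    u ^ (a + b).val = u ^ a.val * u ^ b.val := by
  rw [ZMod.val_add, pow_mod_eq_of_pow_eq_one hu, pow_add]

theorem pow_zmod_val_mul [NeZero n] (hu : u ^ n = 1) (a b : ZMod n) :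
    u ^ (a * b).val = (u ^ a.val) ^ b.val := by
  rw [ZMod.val_mul, pow_mod_eq_of_pow_eq_one hu, pow_mul]

theorem pow_zmod_val_eq_one_iff [NeZero n] (hu : orderOf u = n) (a : ZMod n) :
    u ^ a.val = 1 ↔ a = 0 := by
  rw [← orderOf_dvd_iff_pow_eq_one, hu, ← ZMod.natCast_eq_zero_iff, ZMod.natCast_zmod_val]

end PowZModVal

theorem pow_zmod_val_sub_eq_of_mul_eq {G : Type*} [CommGroup G] {n : ℕ} [NeZero n] {g h : G}
    (hg : g ^ n = 1) (hh : h ^ n = 1) {x₁ x₂ r₁ r₂ : ZMod n}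
    (heq : g ^ x₁.val * h ^ r₁.val = g ^ x₂.val * h ^ r₂.val) :
    g ^ (x₁ - x₂).val = h ^ (r₂ - r₁).val := by
  rw [← sub_add_cancel x₁ x₂, ← sub_add_cancel r₂ r₁, pow_zmod_val_add hg,
    pow_zmod_val_add hh] at heq
  refine mul_right_cancel (b := g ^ x₂.val * h ^ r₁.val) ?_
  calc _ = g ^ (x₁ - x₂).val * g ^ x₂.val * h ^ r₁.val := by rw [mul_assoc]
    _ = g ^ x₂.val * (h ^ (r₂ - r₁).val * h ^ r₁.val) := heq
    _ = _ := by rw [mul_left_comm]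

/-- Breaking the binding property of Pedersen commitments yields the discrete
logarithm of `h` in base `g`. -/
theorem pedersen_binding_dlog {p : ℕ} [Fact p.Prime] {G : Type*} [CommGroup G]
    [Fintype G] (hG : Fintype.card G = p) (g h : G) (hg : g ≠ 1)
    (x₁ x₂ r₁ r₂ : ZMod p)
    (heq : g ^ x₁.val * h ^ r₁.val = g ^ x₂.val * h ^ r₂.val)
    (hx : x₁ ≠ x₂) :
    r₁ ≠ r₂ ∧ h = g ^ ((x₁ - x₂) * (r₂ - r₁)⁻¹).val := by
  have hpow : ∀ u : G, u ^ p = 1 := fun u => hG ▸ pow_card_eq_one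
  have hord : orderOf g = p := orderOf_eq_prime (hpow g) hg
  have hkey := pow_zmod_val_sub_eq_of_mul_eq (hpow g) (hpow h) heq
  have hr : r₁ ≠ r₂ := by
    rintro rfl
    rw [sub_self, ZMod.val_zero, pow_zero, pow_zmod_val_eq_one_iff hord, sub_eq_zero] at hkey
    exact hx hkey
  refine ⟨hr, ?_⟩
  calc h = h ^ ((r₂ - r₁) * (r₂ - r₁)⁻¹).val := by
        rw [mul_inv_cancel₀ (sub_ne_zero.mpr hr.symm), ZMod.val_one, pow_one]
    _ = g ^ ((x₁ - x₂) * (r₂ - r₁)⁻¹).val := by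
        rw [pow_zmod_val_mul (hpow h), ← hkey, pow_zmod_val_mul (hpow g)]
end

section
/- Let a, c ∈ G and z₁, z₂, e₁, e₂ ∈ ZMod p with e₁ ≠ e₂. If h^{z₁} = a · c^{e₁} and h^{z₂} = a · c^{e₂}, then c = h^{(z₁ − z₂) · (e₁ − e₂)⁻¹}. (Special soundness of the Schnorr sigma protocol: two accepting transcripts with the same commitment and distinct challenges determine a discrete logarithm of c in base h.) -/
/-!
Dividing the two verification equations cancels the commitment `a` and gives
`h ^ (z₁ - z₂) = c ^ (e₁ - e₂)`; since `e₁ - e₂` is invertible modulo the prime `p`, raising both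
sides to `(e₁ - e₂)⁻¹` recovers `c`. Exponents in `ZMod n` act through `ZMod.val`, which is
additive and multiplicative modulo `n`, hence compatible with powers of any `u` with `u ^ n = 1`.
-/

section PowZModVal

variable {n : ℕ}

theorem pow_zmod_val_add_s8 [NeZero n] {M : Type*} [Monoid M] {u : M} (hu : u ^ n = 1) (x y : ZMod n) :
    u ^ (x + y).val = u ^ x.val * u ^ y.val := by
  rw [ZMod.val_add, ← pow_eq_pow_mod _ hu, pow_add]

theorem pow_zmod_val_mul_s8 {M : Type*} [Monoid M] {u : M} (hu : u ^ n = 1) (x y : ZMod n) :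
    u ^ (x * y).val = (u ^ x.val) ^ y.val := by
  rw [ZMod.val_mul, ← pow_eq_pow_mod _ hu, pow_mul]

theorem pow_zmod_val_sub [NeZero n] {G : Type*} [Group G] {u : G} (hu : u ^ n = 1) (x y : ZMod n) :
    u ^ (x - y).val = u ^ x.val / u ^ y.val :=
  eq_div_of_mul_eq' <| by rw [← pow_zmod_val_add_s8 hu, sub_add_cancel]

end PowZModVal

theorem pow_zmod_val_pow_inv_val {p : ℕ} [Fact p.Prime] {M : Type*} [Monoid M] {u : M}
    (hu : u ^ p = 1) {e : ZMod p} (he : e ≠ 0) : (u ^ e.val) ^ e⁻¹.val = u := by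
  rw [← pow_zmod_val_mul_s8 hu, mul_inv_cancel₀ he, ZMod.val_one, pow_one]

/-- Special soundness of the Schnorr sigma protocol: two accepting transcripts
with the same commitment and distinct challenges determine a discrete
logarithm of `c` in base `h`. -/
theorem schnorr_special_soundness {p : ℕ} [Fact p.Prime] {G : Type*} [CommGroup G]
    [Fintype G] (hG : Fintype.card G = p) (h : G)
    (a c : G) (z₁ z₂ e₁ e₂ : ZMod p) (he : e₁ ≠ e₂)
    (h₁ : h ^ z₁.val = a * c ^ e₁.val)
    (h₂ : h ^ z₂.val = a * c ^ e₂.val) :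
    c = h ^ ((z₁ - z₂) * (e₁ - e₂)⁻¹).val := by
  have hh : h ^ p = 1 := hG ▸ pow_card_eq_one
  have hc : c ^ p = 1 := hG ▸ pow_card_eq_one
  have key : h ^ (z₁ - z₂).val = c ^ (e₁ - e₂).val := by
    rw [pow_zmod_val_sub hh, pow_zmod_val_sub hc, h₁, h₂, mul_div_mul_left_eq_div]
  calc c = (c ^ (e₁ - e₂).val) ^ (e₁ - e₂)⁻¹.val :=
        (pow_zmod_val_pow_inv_val hc (sub_ne_zero.mpr he)).symm
    _ = h ^ ((z₁ - z₂) * (e₁ - e₂)⁻¹).val := by rw [← key, pow_zmod_val_mul_s8 hh]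
end

section
/- Assume g ≠ 1 and let α ∈ ZMod p with h = g^α. Let n, ℓ ∈ ℕ with n · 2^ℓ ≤ p. Let v : Fin n → ℕ with v j < 2^ℓ for all j, r : Fin n → ZMod p, bits b : Fin n → Fin ℓ → ℕ with b j k ≤ 1, s : Fin n → Fin ℓ → ZMod p, and t ∈ ZMod p. Set coin_j := g^{v j} · h^{r j}, coin'_j := ∏_k (g^{b j k} · h^{s j k})^{2^k}, and suppose ∏_j coin'_j = (∏_j coin_j) · h^t. Then either ∑_j ∑_k b j k · 2^k = ∑_j v j as natural numbers, or, with Δ := ((∑_j ∑_k b j k · 2^k : ℕ) − (∑_j v j : ℕ) : ZMod p) (computed by casting each sum to ZMod p and subtracting) and S := ∑_j (∑_k (2^k : ZMod p) · s j k − r j), we have Δ ≠ 0, t − S ≠ 0, and α = Δ · (t − S)⁻¹. (The bit-decomposition range proof combined with the Schnorr balance proof ensures the integer zero-sum constraint, unless the discrete logarithm of h in base g can be computed.) -/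
/-!
Write `h = g ^ α`. Every coin is then a power of `g`, and since `g` has order `p` the balance
equation `∏ coin' = (∏ coin) * h ^ t` holds exactly when the exponents agree in `ZMod p`; collecting
terms gives `Δ = α * (t - S)`. The range proofs bound both value sums by `n * 2 ^ ℓ ≤ p`, so they
cannot wrap around modulo `p`: if they differ as natural numbers then `Δ ≠ 0`, hence `t - S ≠ 0`,
and `α = Δ * (t - S)⁻¹` is the discrete logarithm of `h`.
-/

open Finset

lemma sum_lt_of_forall_lt_of_mul_le {n m p : ℕ} (hp : 0 < p) {w : Fin n → ℕ}
    (hw : ∀ j, w j < m) (hnm : n * m ≤ p) : ∑ j, w j < p := by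
  rcases Nat.eq_zero_or_pos n with rfl | hn
  · simpa using hp
  calc ∑ j, w j < ∑ _j : Fin n, m := sum_lt_sum_of_nonempty (univ_nonempty_iff.2 ⟨⟨0, hn⟩⟩)
          fun j _ ↦ hw j
    _ = n * m := by simp
    _ ≤ p := hnm

lemma sum_bit_mul_two_pow_lt {ℓ : ℕ} {b : Fin ℓ → ℕ} (hb : ∀ k, b k ≤ 1) :
    ∑ k, b k * 2 ^ (k : ℕ) < 2 ^ ℓ :=
  calc ∑ k, b k * 2 ^ (k : ℕ) ≤ ∑ k : Fin ℓ, 2 ^ (k : ℕ) :=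
        sum_le_sum fun k _ ↦ mul_le_of_le_one_left (Nat.zero_le _) (hb k)
    _ = ∑ k ∈ range ℓ, 2 ^ k := Fin.sum_univ_eq_sum_range _ _
    _ < 2 ^ ℓ := Nat.geomSum_lt le_rfl fun _ ↦ mem_range.1

lemma pow_eq_pow_iff_natCast_eq {G : Type*} [LeftCancelMonoid G] {g : G} {p : ℕ}
    (hg : orderOf g = p) {x y : ℕ} : g ^ x = g ^ y ↔ (x : ZMod p) = y := by
  rw [pow_eq_pow_iff_modEq, hg, ZMod.natCast_eq_natCast_iff]

lemma natCast_sum_sub_natCast_sum_eq_mul_of_prod_eq {p : ℕ} [NeZero p] {G : Type*} [CommGroup G]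
    {g h : G} (hgp : orderOf g = p) {α : ZMod p} (hα : h = g ^ α.val) {n ℓ : ℕ} {v : Fin n → ℕ}
    {r : Fin n → ZMod p} {b : Fin n → Fin ℓ → ℕ} {s : Fin n → Fin ℓ → ZMod p} {t : ZMod p}
    (hfin : ∏ j, ∏ k : Fin ℓ, (g ^ (b j k) * h ^ (s j k).val) ^ (2 ^ (k : ℕ)) =
      (∏ j, g ^ ((v j : ZMod p)).val * h ^ (r j).val) * h ^ t.val) :
    ((∑ j, ∑ k : Fin ℓ, b j k * 2 ^ (k : ℕ) : ℕ) : ZMod p) - ((∑ j, v j : ℕ) : ZMod p) =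
      α * (t - ∑ j, ((∑ k : Fin ℓ, (2 ^ (k : ℕ) : ZMod p) * s j k) - r j)) := by
  simp only [hα, ← pow_mul, ← pow_add, prod_pow_eq_pow_sum, pow_eq_pow_iff_natCast_eq hgp] at hfin
  push_cast [ZMod.natCast_zmod_val] at hfin ⊢
  simp only [add_mul, sum_add_distrib, sum_sub_distrib, mul_sub, mul_sum] at hfin ⊢
  linear_combination (norm := ring_nf) hfin

/-- The bit-decomposition range proof combined with the Schnorr balance proof
ensures the integer zero-sum constraint, unless the discrete logarithm of `h`
in base `g` can be computed. -/
theorem psc_range_soundness {p : ℕ} [Fact p.Prime] {G : Type*} [CommGroup G]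
    [Fintype G] (hG : Fintype.card G = p) (g h : G) (hg : g ≠ 1)
    (α : ZMod p) (hα : h = g ^ α.val)
    (n ℓ : ℕ) (hnl : n * 2 ^ ℓ ≤ p)
    (v : Fin n → ℕ) (hv : ∀ j, v j < 2 ^ ℓ)
    (r : Fin n → ZMod p)
    (b : Fin n → Fin ℓ → ℕ) (hb : ∀ j k, b j k ≤ 1)
    (s : Fin n → Fin ℓ → ZMod p) (t : ZMod p)
    (coin : Fin n → G)
    (hcoin : ∀ j, coin j = g ^ (((v j : ℕ) : ZMod p)).val * h ^ (r j).val)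
    (coin' : Fin n → G)
    (hcoin' : ∀ j, coin' j = ∏ k : Fin ℓ, (g ^ (b j k) * h ^ (s j k).val) ^ (2 ^ (k : ℕ)))
    (hfin : (∏ j, coin' j) = (∏ j, coin j) * h ^ t.val)
    (Δ : ZMod p)
    (hΔ : Δ = ((∑ j, ∑ k : Fin ℓ, b j k * 2 ^ (k : ℕ) : ℕ) : ZMod p)
                - ((∑ j, v j : ℕ) : ZMod p))
    (S : ZMod p)
    (hS : S = ∑ j, ((∑ k : Fin ℓ, (2 ^ (k : ℕ) : ZMod p) * s j k) - r j)) :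
    (∑ j, ∑ k : Fin ℓ, b j k * 2 ^ (k : ℕ)) = (∑ j, v j)
      ∨ (Δ ≠ 0 ∧ t - S ≠ 0 ∧ α = Δ * (t - S)⁻¹) := by
  have hp : 0 < p := (Fact.out : p.Prime).pos
  have hgp : orderOf g = p := orderOf_eq_prime (hG ▸ pow_card_eq_one) hg
  have hkey : Δ = α * (t - S) := by
    subst hΔ hS
    refine natCast_sum_sub_natCast_sum_eq_mul_of_prod_eq hgp hα ?_
    simpa only [hcoin, hcoin'] using hfin
  have hbits : ∑ j, ∑ k : Fin ℓ, b j k * 2 ^ (k : ℕ) < p :=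
    sum_lt_of_forall_lt_of_mul_le hp (fun j ↦ sum_bit_mul_two_pow_lt (hb j)) hnl
  have hvals : ∑ j, v j < p := sum_lt_of_forall_lt_of_mul_le hp hv hnl
  refine or_iff_not_imp_left.2 fun hne ↦ ?_
  have hΔ0 : Δ ≠ 0 := by
    rw [hΔ, sub_ne_zero]
    exact fun hcast ↦ hne (CharP.natCast_injOn_Iio (ZMod p) p hbits hvals hcast)
  have hts : t - S ≠ 0 := right_ne_zero_of_mul (hkey ▸ hΔ0)
  exact ⟨hΔ0, hts, (eq_mul_inv_iff_mul_eq₀ hts).2 hkey.symm⟩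
end

section
/- Assume g ≠ 1 and let α ∈ ZMod p with h = g^α. Let c, c_a, c_b ∈ G and x₁, x₂, f₁, f₂, za₁, za₂, zb₁, zb₂ ∈ ZMod p with x₁ ≠ x₂, satisfying for i = 1, 2: c^{x_i} · c_a = g^{f_i} · h^{za_i} and c^{x_i − f_i} · c_b = h^{zb_i} (where c^{x_i − f_i} denotes c raised to the representative of x_i − f_i). Set m := (f₁ − f₂)·(x₁ − x₂)⁻¹ and rho := (za₁ − za₂)·(x₁ − x₂)⁻¹. Then m·(1 − m)·(x₁ − x₂) = α·((zb₁ − zb₂) − rho·((x₁ − x₂) − (f₁ − f₂))); consequently, either m = 0, or m = 1, or ((zb₁ − zb₂) − rho·((x₁ − x₂) − (f₁ − f₂)) ≠ 0 and α = m·(1 − m)·(x₁ − x₂)·((zb₁ − zb₂) − rho·((x₁ − x₂) − (f₁ − f₂)))⁻¹). (Second extraction step in the special soundness of the bit-commitment sigma protocol: the extracted committed value m is a bit, unless the discrete logarithm of h in base g can be computed.) -/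
/-!
Since `|G| = p` and `g ≠ 1`, the map `a ↦ g ^ a.val` is an isomorphism from `ZMod p` onto `G`.
Writing `c`, `c_a`, `c_b` and `h` as powers of `g`, the four verification equations become linear
equations over `ZMod p`: subtracting them gives `log c = m + α·rho` and
`log c · ((x₁ - x₂) - (f₁ - f₂)) = α·(zb₁ - zb₂)`, and eliminating `log c` yields the identity.
-/

section PowVal

variable {M : Type*} [Monoid M] {n : ℕ} {g : M}

lemma pow_val_add_of_pow_eq_one [NeZero n] (hg : g ^ n = 1) (a b : ZMod n) :
    g ^ (a + b).val = g ^ a.val * g ^ b.val := by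
  rw [ZMod.val_add, ← pow_eq_pow_mod _ hg, pow_add]

lemma pow_val_mul_of_pow_eq_one (hg : g ^ n = 1) (a b : ZMod n) :
    g ^ (a * b).val = (g ^ a.val) ^ b.val := by
  rw [ZMod.val_mul, ← pow_eq_pow_mod _ hg, pow_mul]

lemma pow_val_injective_of_orderOf_eq_s14 [NeZero n] (hg : orderOf g = n) :
    Function.Injective fun a : ZMod n ↦ g ^ a.val := fun a b hab ↦
  ZMod.val_injective n <|
    pow_injOn_Iio_orderOf (x := g) (by simpa [hg] using a.val_lt) (by simpa [hg] using b.val_lt) hab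

end PowVal

lemma pow_val_bijective_of_card_eq_prime {p : ℕ} [Fact p.Prime] {G : Type*} [Group G]
    [Fintype G] (hG : Fintype.card G = p) {g : G} (hg : g ≠ 1) :
    Function.Bijective fun a : ZMod p ↦ g ^ a.val :=
  (Fintype.bijective_iff_injective_and_card _).mpr
    ⟨pow_val_injective_of_orderOf_eq_s14 (orderOf_eq_prime (hG ▸ pow_card_eq_one) hg),
      by rw [ZMod.card, hG]⟩

section Field

variable {K : Type*} [Field K]

lemma mul_one_sub_mul_eq_of_extraction {α γ δ ε x₁ x₂ f₁ f₂ za₁ za₂ zb₁ zb₂ m rho : K}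
    (hx : x₁ ≠ x₂)
    (h₁a : γ * x₁ + δ = f₁ + α * za₁) (h₂a : γ * x₂ + δ = f₂ + α * za₂)
    (h₁b : γ * (x₁ - f₁) + ε = α * zb₁) (h₂b : γ * (x₂ - f₂) + ε = α * zb₂)
    (hm : m = (f₁ - f₂) * (x₁ - x₂)⁻¹) (hrho : rho = (za₁ - za₂) * (x₁ - x₂)⁻¹) :
    m * (1 - m) * (x₁ - x₂) = α * ((zb₁ - zb₂) - rho * ((x₁ - x₂) - (f₁ - f₂))) := by
  have hd : x₁ - x₂ ≠ 0 := sub_ne_zero.mpr hx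
  have hf : f₁ - f₂ = m * (x₁ - x₂) := by rw [hm, inv_mul_cancel_right₀ hd]
  have hγ : γ = m + α * rho := by
    rw [hm, hrho, ← mul_assoc, ← add_mul, eq_mul_inv_iff_mul_eq₀ hd]
    linear_combination h₁a - h₂a
  have hγb : γ * ((x₁ - x₂) - (f₁ - f₂)) = α * (zb₁ - zb₂) := by
    linear_combination h₁b - h₂b
  rw [hγ] at hγb
  linear_combination hγb + m * hf

lemma eq_zero_or_eq_one_or_eq_mul_inv_of_mul_one_sub_mul_eq {m d α w : K} (hd : d ≠ 0)
    (h : m * (1 - m) * d = α * w) :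
    m = 0 ∨ m = 1 ∨ (w ≠ 0 ∧ α = m * (1 - m) * d * w⁻¹) := by
  by_cases hm₀ : m = 0
  · exact Or.inl hm₀
  by_cases hm₁ : m = 1
  · exact Or.inr (Or.inl hm₁)
  have hlhs : m * (1 - m) * d ≠ 0 :=
    mul_ne_zero (mul_ne_zero hm₀ (sub_ne_zero.mpr (Ne.symm hm₁))) hd
  have hw : w ≠ 0 := right_ne_zero_of_mul (h ▸ hlhs)
  exact Or.inr (Or.inr ⟨hw, (eq_mul_inv_iff_mul_eq₀ hw).mpr h.symm⟩)

end Field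

/-- Second extraction step in the special soundness of the bit-commitment
sigma protocol: the extracted committed value `m` is a bit, unless the
discrete logarithm of `h` in base `g` can be computed. -/
theorem bit_sigma_extract_bit {p : ℕ} [Fact p.Prime] {G : Type*} [CommGroup G]
    [Fintype G] (hG : Fintype.card G = p) (g h : G) (hg : g ≠ 1)
    (α : ZMod p) (hα : h = g ^ α.val)
    (c ca cb : G) (x₁ x₂ f₁ f₂ za₁ za₂ zb₁ zb₂ : ZMod p) (hx : x₁ ≠ x₂)
    (h₁a : c ^ x₁.val * ca = g ^ f₁.val * h ^ za₁.val)
    (h₂a : c ^ x₂.val * ca = g ^ f₂.val * h ^ za₂.val)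
    (h₁b : c ^ (x₁ - f₁).val * cb = h ^ zb₁.val)
    (h₂b : c ^ (x₂ - f₂).val * cb = h ^ zb₂.val)
    (m : ZMod p) (hm : m = (f₁ - f₂) * (x₁ - x₂)⁻¹)
    (rho : ZMod p) (hrho : rho = (za₁ - za₂) * (x₁ - x₂)⁻¹) :
    m * (1 - m) * (x₁ - x₂)
        = α * ((zb₁ - zb₂) - rho * ((x₁ - x₂) - (f₁ - f₂))) ∧
      (m = 0 ∨ m = 1 ∨
        ((zb₁ - zb₂) - rho * ((x₁ - x₂) - (f₁ - f₂)) ≠ 0 ∧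
          α = m * (1 - m) * (x₁ - x₂)
                * ((zb₁ - zb₂) - rho * ((x₁ - x₂) - (f₁ - f₂)))⁻¹)) := by
  have hgp : g ^ p = 1 := hG ▸ pow_card_eq_one
  obtain ⟨hinj, hsurj⟩ := pow_val_bijective_of_card_eq_prime hG hg
  obtain ⟨γ, rfl⟩ := hsurj c
  obtain ⟨δ, rfl⟩ := hsurj ca
  obtain ⟨ε, rfl⟩ := hsurj cb
  subst hα
  simp only [← pow_val_mul_of_pow_eq_one hgp, ← pow_val_add_of_pow_eq_one hgp] at h₁a h₂a h₁b h₂b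
  have key := mul_one_sub_mul_eq_of_extraction hx (hinj h₁a) (hinj h₂a) (hinj h₁b) (hinj h₂b)
    hm hrho
  exact ⟨key, eq_zero_or_eq_one_or_eq_mul_inv_of_mul_one_sub_mul_eq (sub_ne_zero.mpr hx) key⟩
end
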